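/- arXiv:2307.15285 — 3 statements merged into one kernel-verified Lean document; each statement's English description precedes it below -/
import Mathlib

section
/- Let t be a positive integer, let ε be a uniformly random coloring ε : {1,…,t} → {−1,+1} (i.e., the 2^t colorings are equally likely), and let b be a function defined on colorings taking values in some countable set. If the base-2 Shannon entropy of the random variable b(ε) satisfies H(b(ε)) ≤ t/5, then there exist two colorings ε₁, ε₂ : {1,…,t} → {−1,+1} that differ in at least t/4 coordinates and satisfy b(ε₁) = b(ε₂). -/
noncomputable section

/-- The `2^t` colorings `ε : {1,…,t} → {−1,+1}`. -/
def colorings (t : ℕ) : Finset (Fin t → ℤ) :=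
  Fintype.piFinset fun _ => ({-1, 1} : Finset ℤ)

/-- The base-2 Shannon entropy `H(b(ε))` of the random variable `b(ε)`, where `ε` is a
uniformly random coloring in `{−1,+1}^t`: `H = −Σ_λ p_λ log₂ p_λ` with
`p_λ = P(b(ε) = λ)`. -/
def colEntropy {t : ℕ} {Λ : Type*} (b : (Fin t → ℤ) → Λ) : ℝ := by
  classical
  exact -∑ v ∈ (colorings t).image b,
    ((((colorings t).filter fun ε => b ε = v).card : ℝ) / ((colorings t).card : ℝ)) *
      Real.logb 2
        ((((colorings t).filter fun ε => b ε = v).card : ℝ) / ((colorings t).card : ℝ))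


/-!
Suppose any two colorings in the same fibre of `b` were at Hamming distance less than `t/4`.
Since `H(b(ε)) ≤ t/5` bits, the largest fibre `F` has `|F| ≥ 2^(4t/5)`. On the other hand, for
the uniform distribution on any set `F` of `±1`-vectors, subadditivity of entropy gives
`log |F| ≤ ∑ⱼ h(pⱼ)`, where `pⱼ` is the proportion of `F` with a `+1` in coordinate `j`; here
it follows from Gibbs' inequality against the product of the coordinate marginals. The bound
`h(p) ≤ 3p(1-p) + 7/40` (in nats) converts this into the mean pairwise Hamming distance, which
equals `∑ⱼ 2pⱼ(1-pⱼ)`. With all distances below `t/4` this yields `log |F| ≤ 11t/20`, which is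
less than `(4/5) t log 2`.
-/

open Real Finset

lemma negMulLog_pow_succ_le {x : ℝ} (hx : 0 ≤ x) (k : ℕ) :
    negMulLog (x ^ (k + 1)) ≤ (k + 1) * x ^ k * (1 - x) := by
  have h : negMulLog (x ^ (k + 1)) = (k + 1) * x ^ k * negMulLog x := by
    simp only [negMulLog, log_pow]; push_cast; ring
  rw [h]
  gcongr
  exact negMulLog_le_one_sub_self hx

lemma binEntropy_le_of_le_half {p : ℝ} (h0 : 0 ≤ p) (h1 : p ≤ 1 / 2) :
    binEntropy p ≤ 3 * p * (1 - p) + 7 / 40 := by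
  obtain ⟨x, hx0, rfl⟩ : ∃ x, 0 ≤ x ∧ x ^ 4 = p :=
    ⟨p ^ (4⁻¹ : ℝ), by positivity, by exact_mod_cast rpow_inv_natCast_pow h0 four_ne_zero⟩
  have hpoly : 4 * x ^ 3 * (1 - x) + x ^ 4 ≤ 3 * x ^ 4 * (1 - x ^ 4) + 7 / 40 := by
    nlinarith [mul_nonneg (sub_nonneg.2 h1) (sq_nonneg (x - 11 / 20)),
      mul_nonneg hx0 (sq_nonneg (x - 11 / 20)), sq_nonneg (x ^ 2 - 3 / 10),
      mul_nonneg (mul_nonneg hx0 hx0) (sq_nonneg (x - 11 / 20))]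
  have h₁ := negMulLog_pow_succ_le hx0 3
  have h₂ := negMulLog_le_one_sub_self (x := 1 - x ^ 4) (by linarith)
  rw [binEntropy_eq_negMulLog_add_negMulLog_one_sub]
  push_cast at h₁
  linarith

theorem binEntropy_le_three_mul_mul_one_sub_add {p : ℝ} (h0 : 0 ≤ p) (h1 : p ≤ 1) :
    binEntropy p ≤ 3 * p * (1 - p) + 7 / 40 := by
  rcases le_total p (1 / 2) with h | h
  · exact binEntropy_le_of_le_half h0 h
  · have := binEntropy_le_of_le_half (p := 1 - p) (by linarith) (by linarith)
    rw [binEntropy_one_sub] at this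
    linarith

section UniformEntropy

variable {β γ : Type*} [DecidableEq γ]

def uniformEntropy (S : Finset β) (f : β → γ) : ℝ :=
  ∑ c ∈ S.image f, negMulLog (#{x ∈ S | f x = c} / #S)

lemma sum_card_fiber_div_card {S : Finset β} (hS : S.Nonempty) (f : β → γ) :
    ∑ c ∈ S.image f, (#{x ∈ S | f x = c} : ℝ) / #S = 1 := by
  rw [← sum_div, div_eq_one_iff_eq (by positivity), ← Nat.cast_sum, ← card_eq_sum_card_image]

lemma sum_neg_log_card_fiber_div_card (S : Finset β) (f : β → γ) :
    ∑ x ∈ S, -log (#{y ∈ S | f y = f x} / #S) = #S * uniformEntropy S f := by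
  rcases S.eq_empty_or_nonempty with rfl | hS
  · simp
  rw [sum_comp (fun c => -log (#{y ∈ S | f y = c} / #S)) f, uniformEntropy, mul_sum]
  refine sum_congr rfl fun c _ => ?_
  have hS' : (#S : ℝ) ≠ 0 := by positivity
  rw [negMulLog, nsmul_eq_mul]
  field_simp

lemma exists_log_card_sub_uniformEntropy_le {S : Finset β} (hS : S.Nonempty) (f : β → γ) :
    ∃ x ∈ S, log #S - uniformEntropy S f ≤ log #{y ∈ S | f y = f x} := by
  obtain ⟨x, hx, hmax⟩ := S.exists_max_image (fun x => #{y ∈ S | f y = f x}) hS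
  refine ⟨x, hx, ?_⟩
  have hpos : ∀ z ∈ S, (0 : ℝ) < #{y ∈ S | f y = f z} := fun z hz => by
    exact_mod_cast card_pos.2 ⟨z, by simp [hz]⟩
  have hm : (0 : ℝ) < #S := by exact_mod_cast hS.card_pos
  have hsum : #S * (log #S - log #{y ∈ S | f y = f x}) ≤ #S * uniformEntropy S f := by
    rw [← sum_neg_log_card_fiber_div_card, ← log_div hm.ne' (hpos x hx).ne', ← inv_div, log_inv,
      ← nsmul_eq_mul, ← sum_const]
    refine sum_le_sum fun z hz => neg_le_neg (log_le_log (by have := hpos z hz; positivity) ?_)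
    exact div_le_div_of_nonneg_right (by exact_mod_cast hmax z hz) hm.le
  linarith [le_of_mul_le_mul_left hsum hm]

lemma card_mul_log_card_le_sum_neg_log {S : Finset β} {q : β → ℝ} (hq : ∀ x ∈ S, 0 < q x)
    (hsum : ∑ x ∈ S, q x ≤ 1) :
    #S * log #S ≤ ∑ x ∈ S, -log (q x) := by
  rcases S.eq_empty_or_nonempty with rfl | hS
  · simp
  have hm : (0 : ℝ) < #S := by exact_mod_cast hS.card_pos
  have hlog : ∑ x ∈ S, (log #S + log (q x)) ≤ ∑ x ∈ S, (#S * q x - 1) := by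
    refine sum_le_sum fun x hx => ?_
    rw [← log_mul hm.ne' (hq x hx).ne']
    exact log_le_sub_one_of_pos (mul_pos hm (hq x hx))
  rw [sum_add_distrib, sum_sub_distrib, ← mul_sum, sum_const, nsmul_eq_mul, sum_const,
    nsmul_eq_mul, mul_one] at hlog
  rw [sum_neg_distrib]
  nlinarith

lemma sum_card_filter_ne_add_sum_card_fiber_sq (S : Finset β) (f : β → γ) :
    ∑ x ∈ S, #{y ∈ S | f y ≠ f x} + ∑ c ∈ S.image f, #{x ∈ S | f x = c} ^ 2 = #S ^ 2 := by
  have h := sum_comp (s := S) (fun c => #{y ∈ S | f y = c}) f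
  simp only [smul_eq_mul, ← sq] at h
  rw [← h, ← sum_add_distrib, sq,
    sum_const_nat fun x _ => by rw [add_comm, card_filter_add_card_filter_not]]

lemma card_sq_mul_uniformEntropy_le {S : Finset β} {f : β → γ} {u v : γ} (huv : u ≠ v)
    (hf : ∀ x ∈ S, f x = u ∨ f x = v) :
    #S ^ 2 * uniformEntropy S f ≤
      3 / 2 * ∑ x ∈ S, (#{y ∈ S | f y ≠ f x} : ℝ) + 7 / 40 * #S ^ 2 := by
  rcases S.eq_empty_or_nonempty with rfl | hS
  · simp
  have hm : (0 : ℝ) < #S := by exact_mod_cast hS.card_pos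
  have hpair : ∀ g : ℕ → ℝ, g 0 = 0 →
      ∑ c ∈ S.image f, g #{x ∈ S | f x = c} = g #{x ∈ S | f x = u} + g #{x ∈ S | f x = v} := by
    intro g hg
    rw [← sum_pair (f := fun c => g #{x ∈ S | f x = c}) huv]
    refine sum_subset (fun c hc => ?_) fun c _ hc => ?_
    · obtain ⟨x, hx, rfl⟩ := mem_image.1 hc
      simpa using hf x hx
    · have hempty : {x ∈ S | f x = c} = ∅ :=
        filter_eq_empty_iff.2 fun x hx hfx => hc (hfx ▸ mem_image_of_mem f hx)
      rw [hempty, card_empty, hg]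
  set a : ℝ := (#{x ∈ S | f x = u} : ℝ)
  set b : ℝ := (#{x ∈ S | f x = v} : ℝ)
  have hab : a + b = #S := by
    rw [← hpair Nat.cast Nat.cast_zero, ← Nat.cast_sum, ← card_eq_sum_card_image]
  have hH : uniformEntropy S f = binEntropy (a / #S) := by
    have h := hpair (fun k => negMulLog (k / #S)) (by simp)
    rw [uniformEntropy, h, binEntropy_eq_negMulLog_add_negMulLog_one_sub]
    congr 2
    field_simp
    linarith
  have hdist : (∑ x ∈ S, #{y ∈ S | f y ≠ f x} : ℝ) = 2 * a * b := by
    have h := congrArg (Nat.cast (R := ℝ)) (sum_card_filter_ne_add_sum_card_fiber_sq S f)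
    push_cast at h
    rw [hpair (fun k => (k : ℝ) ^ 2) (by simp), ← hab] at h
    linarith
  have hbin := binEntropy_le_three_mul_mul_one_sub_add (p := a / #S) (by positivity)
    (div_le_one_of_le₀ (by linarith [show 0 ≤ b by positivity]) hm.le)
  rw [hH, hdist]
  have hscale : (#S : ℝ) ^ 2 * (3 * (a / #S) * (1 - a / #S)) = 3 * a * b := by
    field_simp
    rw [← hab]
    ring
  nlinarith

end UniformEntropy

section Cube

variable {ι α : Type*} [Fintype ι] [DecidableEq α]

theorem log_card_le_sum_uniformEntropy (S : Finset (ι → α)) :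
    log #S ≤ ∑ i, uniformEntropy S (fun x => x i) := by
  classical
  rcases S.eq_empty_or_nonempty with rfl | hS
  · simp [uniformEntropy]
  have hm : (0 : ℝ) < #S := by exact_mod_cast hS.card_pos
  set p : ι → α → ℝ := fun i c => #{x ∈ S | x i = c} / #S
  have hpos : ∀ x ∈ S, ∀ i, 0 < p i (x i) := fun x hx i => by
    have : 0 < #{y ∈ S | y i = x i} := card_pos.2 ⟨x, by simp [hx]⟩
    positivity
  have hprod_le : ∑ x ∈ S, ∏ i, p i (x i) ≤ 1 := calc
    ∑ x ∈ S, ∏ i, p i (x i)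
      ≤ ∑ x ∈ Fintype.piFinset fun i => S.image (fun y => y i), ∏ i, p i (x i) := by
        refine sum_le_sum_of_subset_of_nonneg (fun x hx => ?_) fun x _ _ => ?_
        · exact Fintype.mem_piFinset.2 fun i => mem_image_of_mem _ hx
        · exact prod_nonneg fun i _ => by positivity
    _ = ∏ i, ∑ c ∈ S.image (fun y => y i), p i c := (prod_univ_sum _ _).symm
    _ = 1 := prod_eq_one fun i _ => sum_card_fiber_div_card hS _
  have hgibbs :=
    card_mul_log_card_le_sum_neg_log (fun x hx => prod_pos fun i _ => hpos x hx i) hprod_le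
  refine le_of_mul_le_mul_left (hgibbs.trans_eq ?_) hm
  rw [mul_sum, ← sum_congr rfl fun i _ => sum_neg_log_card_fiber_div_card S (fun x => x i),
    sum_comm]
  refine sum_congr rfl fun x hx => ?_
  rw [log_prod fun i _ => (hpos x hx i).ne', ← sum_neg_distrib]

lemma sum_sum_hammingDist (S : Finset (ι → α)) :
    ∑ x ∈ S, ∑ y ∈ S, hammingDist x y = ∑ i, ∑ x ∈ S, #{y ∈ S | y i ≠ x i} := by
  calc ∑ x ∈ S, ∑ y ∈ S, hammingDist x y
      = ∑ x ∈ S, ∑ i, ∑ y ∈ S, if y i ≠ x i then 1 else 0 := by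
        refine sum_congr rfl fun x _ => ?_
        simp only [hammingDist, card_filter, ne_comm (a := x _)]
        exact sum_comm
    _ = ∑ i, ∑ x ∈ S, #{y ∈ S | y i ≠ x i} := by simp only [card_filter]; exact sum_comm

lemma ncard_setOf_ne_eq_hammingDist (x y : ι → α) : {i | x i ≠ y i}.ncard = hammingDist x y := by
  simp [Set.ncard_eq_toFinset_card', hammingDist]

theorem log_card_le_of_hammingDist_le [DecidableEq ι] {u v : α} (huv : u ≠ v)
    {S : Finset (ι → α)} (hS : S ⊆ Fintype.piFinset fun _ => {u, v}) (hne : S.Nonempty) {r : ℝ}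
    (hr : ∀ x ∈ S, ∀ y ∈ S, hammingDist x y ≤ r) :
    log #S ≤ 3 / 2 * r + 7 / 40 * Fintype.card ι := by
  have hcoord : ∀ i, (#S : ℝ) ^ 2 * uniformEntropy S (fun x => x i)
      ≤ 3 / 2 * ∑ x ∈ S, (#{y ∈ S | y i ≠ x i} : ℝ) + 7 / 40 * #S ^ 2 := fun i =>
    card_sq_mul_uniformEntropy_le huv fun x hx => by
      simpa using Fintype.mem_piFinset.1 (hS hx) i
  have hdist : ∑ i, ∑ x ∈ S, (#{y ∈ S | y i ≠ x i} : ℝ) ≤ #S ^ 2 * r := calc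
    ∑ i, ∑ x ∈ S, (#{y ∈ S | y i ≠ x i} : ℝ) = ∑ x ∈ S, ∑ y ∈ S, (hammingDist x y : ℝ) := by
      exact_mod_cast (sum_sum_hammingDist S).symm
    _ ≤ ∑ x ∈ S, ∑ y ∈ S, r := sum_le_sum fun x hx => sum_le_sum fun y hy => hr x hx y hy
    _ = #S ^ 2 * r := by simp only [sum_const, nsmul_eq_mul]; ring
  have hscaled : (#S : ℝ) ^ 2 * log #S ≤ #S ^ 2 * (3 / 2 * r + 7 / 40 * Fintype.card ι) := calc
    (#S : ℝ) ^ 2 * log #S ≤ #S ^ 2 * ∑ i, uniformEntropy S (fun x => x i) := by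
      gcongr; exact log_card_le_sum_uniformEntropy S
    _ ≤ ∑ i, (3 / 2 * ∑ x ∈ S, (#{y ∈ S | y i ≠ x i} : ℝ) + 7 / 40 * #S ^ 2) := by
      rw [mul_sum]; exact sum_le_sum fun i _ => hcoord i
    _ ≤ #S ^ 2 * (3 / 2 * r + 7 / 40 * Fintype.card ι) := by
      rw [sum_add_distrib, ← mul_sum, sum_const, card_univ, nsmul_eq_mul]
      nlinarith
  exact le_of_mul_le_mul_left hscaled (by have := hne.card_pos; positivity)

end Cube

lemma card_colorings (t : ℕ) : #(colorings t) = 2 ^ t := by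
  simp [colorings]

lemma colEntropy_eq_uniformEntropy_div_log_two {t : ℕ} {Λ : Type*} [DecidableEq Λ]
    (b : (Fin t → ℤ) → Λ) :
    colEntropy b = uniformEntropy (colorings t) b / log 2 := by
  obtain rfl : ‹DecidableEq Λ› = fun a b => Classical.propDecidable (a = b) :=
    Subsingleton.elim _ _
  unfold colEntropy uniformEntropy
  rw [sum_div, ← sum_neg_distrib]
  refine sum_congr rfl fun c _ => ?_
  rw [negMulLog, logb]
  ring

theorem entropy_partial_coloring_general (t : ℕ) (ht : 0 < t) {Λ : Type*}
    (b : (Fin t → ℤ) → Λ) (hH : colEntropy b ≤ (t : ℝ) / 5) :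
    ∃ ε₁ ∈ colorings t, ∃ ε₂ ∈ colorings t,
      b ε₁ = b ε₂ ∧
      (t : ℝ) / 4 ≤ (({j : Fin t | ε₁ j ≠ ε₂ j}).ncard : ℝ) := by
  classical
  by_contra! hclose
  obtain ⟨ε, hε, hfiber⟩ :=
    exists_log_card_sub_uniformEntropy_le (S := colorings t) ⟨fun _ => 1, by simp [colorings]⟩ b
  set F := {x ∈ colorings t | b x = b ε}
  have hlower : 4 / 5 * t * log 2 ≤ log #F := by
    rw [colEntropy_eq_uniformEntropy_div_log_two, div_le_iff₀ (log_pos one_lt_two)] at hH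
    rw [card_colorings, Nat.cast_pow, log_pow] at hfiber
    push_cast at hfiber
    linarith
  have hupper : log #F ≤ 3 / 2 * (t / 4) + 7 / 40 * t := by
    have hdiam : ∀ x ∈ F, ∀ y ∈ F, (hammingDist x y : ℝ) ≤ t / 4 := fun x hx y hy => by
      rw [mem_filter] at hx hy
      rw [← ncard_setOf_ne_eq_hammingDist]
      exact (hclose x hx.1 y hy.1 (hx.2.trans hy.2.symm)).le
    simpa using log_card_le_of_hammingDist_le (S := F) (by norm_num : (-1 : ℤ) ≠ 1)
      (filter_subset _ _) ⟨ε, mem_filter.2 ⟨hε, rfl⟩⟩ hdiam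
  -- `(4/5) log 2 > 0.5545 > 0.55 = 3/8 + 7/40`
  nlinarith [mul_lt_mul_of_pos_left log_two_gt_d9 (Nat.cast_pos (α := ℝ).2 ht)]

/-- **The partial coloring lemma via entropy (Lemma 11 in Matousek '96).**
Let `ε : {1,…,t} → {−1,+1}` be a uniformly random coloring and let `b` be a function
of `ε` with values in a countable set. If `H(b(ε)) ≤ t/5`, then there are two
colorings `ε₁, ε₂` differing in at least `t/4` coordinates with `b(ε₁) = b(ε₂)`. -/
theorem entropy_partial_coloring (t : ℕ) (ht : 0 < t) {Λ : Type*} [Countable Λ]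
    (b : (Fin t → ℤ) → Λ) (hH : colEntropy b ≤ (t : ℝ) / 5) :
    ∃ ε₁ ∈ colorings t, ∃ ε₂ ∈ colorings t,
      b ε₁ = b ε₂ ∧
      (t : ℝ) / 4 ≤ (({j : Fin t | ε₁ j ≠ ε₂ j}).ncard : ℝ) :=
  entropy_partial_coloring_general t ht b hH

end
end

section
/- Fix integers d ≥ 1, k ≥ 0 and 0 ≤ m ≤ k. There exists a constant C = C(d,k) such that for all x, z ∈ B^d and all θ = (ω,b) ∈ S^{d−1} × [−1,1], the difference between the m-th derivative tensor of the ReLU^k ridge function at x and its (k−m)-th order Taylor polynomial centered at z satisfies ‖ σ_k^{(m)}(x;θ) − 𝒯^{m,k−m}_z(x;θ) ‖ ≤ C |x − z|^{k−m}, where ‖·‖ is the entrywise maximum norm on tensors. -/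
noncomputable section

/-- Euclidean space `ℝ^d`. -/
abbrev Euc (d : ℕ) : Type := EuclideanSpace ℝ (Fin d)

/-- The Euclidean inner product `x · y`. -/
def dot {d : ℕ} (x y : Euc d) : ℝ := ∑ i, x i * y i

/-- The parameter set `S^{d−1} × [−1,1]`. -/
def Params (d : ℕ) : Set (Euc d × ℝ) :=
  (Metric.sphere (0 : Euc d) 1) ×ˢ (Set.Icc (-1 : ℝ) 1)

/-- The `m`-th derivative tensor of the ReLU^k ridge function:
`σ_k^{(m)}(x;θ) = (k!/(k−m)!) (ω·x+b)^{k−m} ω^{⊗m}` if `ω·x+b ≥ 0`, and `0` otherwise.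
An order-`m` tensor on `ℝ^d` is a function `(Fin m → Fin d) → ℝ`. -/
def sigmaT (d k m : ℕ) (θ : Euc d × ℝ) (x : Euc d) : (Fin m → Fin d) → ℝ :=
  fun I =>
    if 0 ≤ dot θ.1 x + θ.2 then
      (Nat.descFactorial k m : ℝ) * (dot θ.1 x + θ.2) ^ (k - m) * ∏ j, θ.1 (I j)
    else 0

/-- The Taylor polynomial of order `r` of `σ_k^{(m)}(·;θ)` centered at `z`, evaluated at
`x`: `𝒯^{m,r}_z(x;θ) = Σ_{q=0}^{r} (1/q!) ⟨σ_k^{(m+q)}(z;θ), (x − z)^{⊗q}⟩`, where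
the contraction with `(x−z)^{⊗q}` is `Σ_{J} σ^{(m+q)}_{I⌢J}(z;θ) ∏_j (x−z)_{J j}`. -/
def taylorT (d k m r : ℕ) (θ : Euc d × ℝ) (z x : Euc d) : (Fin m → Fin d) → ℝ :=
  fun I => ∑ q ∈ Finset.range (r + 1),
    (1 / (Nat.factorial q : ℝ)) *
      ∑ J : Fin q → Fin d, sigmaT d k (m + q) θ z (Fin.append I J) * ∏ j, (x - z) (J j)

/-!
On the half-space `ω·z + b ≥ 0` the tensor `σ_k^{(m)}(·;θ)` is the polynomial
`(k!/(k−m)!) (ω·x + b)^{k−m} ω^{⊗m}` of degree `k − m`, so by the binomial theorem its Taylor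
polynomial of order `k − m` at `z` reproduces it exactly, while off that half-space the Taylor
polynomial vanishes. The remainder is therefore zero unless `s = ω·x + b` and `t = ω·z + b` have
opposite signs, and then `|s| ≤ |s − t| = |ω·(x − z)| ≤ |x − z|`. Since the entries of `ω^{⊗m}`
are at most `1`, the constant `C = k!/(k−m)!` works.
-/

lemma dot_eq_inner {d : ℕ} (x y : Euc d) : dot x y = inner ℝ x y := by
  simp [dot, PiLp.inner_apply, mul_comm]

lemma dot_sub_right {d : ℕ} (w x z : Euc d) : dot w (x - z) = dot w x - dot w z := by
  simp only [dot_eq_inner, inner_sub_right]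

lemma abs_prod_apply_le_one {d m : ℕ} {w : Euc d} (hw : ‖w‖ = 1) (I : Fin m → Fin d) :
    |∏ j, w (I j)| ≤ 1 := by
  rw [Finset.abs_prod]
  exact Finset.prod_le_one (fun _ _ => abs_nonneg _) fun j _ => hw ▸ PiLp.norm_apply_le w (I j)

lemma prod_append_apply {ι M : Type*} [CommMonoid M] {m q : ℕ} (f : ι → M)
    (I : Fin m → ι) (J : Fin q → ι) :
    ∏ j, f (Fin.append I J j) = (∏ j, f (I j)) * ∏ j, f (J j) := by
  simp [Fin.prod_univ_add]

lemma sum_prod_mul_prod_eq_dot_pow {d q : ℕ} (w v : Euc d) :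
    ∑ J : Fin q → Fin d, (∏ j, w (J j)) * ∏ j, v (J j) = dot w v ^ q := by
  simp [dot, Fintype.sum_pow, Finset.prod_mul_distrib]

lemma sum_sigmaT_append_mul_prod {d k m q : ℕ} (θ : Euc d × ℝ) (z v : Euc d)
    (I : Fin m → Fin d) :
    ∑ J : Fin q → Fin d, sigmaT d k (m + q) θ z (Fin.append I J) * ∏ j, v (J j) =
      if 0 ≤ dot θ.1 z + θ.2 then
        (k.descFactorial (m + q) : ℝ) * (dot θ.1 z + θ.2) ^ (k - (m + q)) *
          (∏ j, θ.1 (I j)) * dot θ.1 v ^ q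
      else 0 := by
  unfold sigmaT
  split_ifs
  · simp_rw [prod_append_apply, ← sum_prod_mul_prod_eq_dot_pow, Finset.mul_sum]
    exact Finset.sum_congr rfl fun _ _ => by ring
  · simp

lemma descFactorial_add (k m q : ℕ) :
    k.descFactorial (m + q) = k.descFactorial m * (k - m).descFactorial q := by
  simpa [mul_comm] using (Nat.descFactorial_mul_descFactorial (n := k) (Nat.le_add_right m q)).symm

/-- The Taylor expansion at `t` of the polynomial `(k!/(k−m)!) X^{k−m}`. -/
lemma sum_range_descFactorial_mul_pow (k m : ℕ) (t u : ℝ) :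
    ∑ q ∈ Finset.range (k - m + 1),
        1 / (q.factorial : ℝ) * ((k.descFactorial (m + q) : ℝ) * t ^ (k - (m + q)) * u ^ q) =
      k.descFactorial m * (t + u) ^ (k - m) := by
  rw [add_comm t, add_pow, Finset.mul_sum]
  refine Finset.sum_congr rfl fun q _ => ?_
  rw [descFactorial_add, Nat.descFactorial_eq_factorial_mul_choose (k - m) q, Nat.sub_add_eq]
  have : (q.factorial : ℝ) ≠ 0 := mod_cast q.factorial_ne_zero
  push_cast
  field_simp

lemma taylorT_eq {d k m : ℕ} (θ : Euc d × ℝ) (z x : Euc d) (I : Fin m → Fin d) :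
    taylorT d k m (k - m) θ z x I =
      if 0 ≤ dot θ.1 z + θ.2 then
        (k.descFactorial m : ℝ) * (dot θ.1 x + θ.2) ^ (k - m) * ∏ j, θ.1 (I j)
      else 0 := by
  unfold taylorT
  simp_rw [sum_sigmaT_append_mul_prod]
  split_ifs
  · calc _ = (∑ q ∈ Finset.range (k - m + 1), 1 / (q.factorial : ℝ) *
            ((k.descFactorial (m + q) : ℝ) * (dot θ.1 z + θ.2) ^ (k - (m + q)) *
              dot θ.1 (x - z) ^ q)) * ∏ j, θ.1 (I j) := by
          rw [Finset.sum_mul]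
          exact Finset.sum_congr rfl fun _ _ => by ring
      _ = _ := by
          rw [sum_range_descFactorial_mul_pow, dot_sub_right]
          ring_nf
  · simp

lemma abs_ite_pow_sub_ite_pow_le (s t : ℝ) (n : ℕ) :
    |(if 0 ≤ s then s ^ n else 0) - (if 0 ≤ t then s ^ n else 0)| ≤ |s - t| ^ n := by
  split_ifs with hs ht ht
  · simp
  · rw [sub_zero, abs_pow]
    refine pow_le_pow_left₀ (abs_nonneg s) ?_ n
    rw [abs_of_nonneg hs, abs_of_pos (by linarith)]
    linarith
  · rw [zero_sub, abs_neg, abs_pow]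
    refine pow_le_pow_left₀ (abs_nonneg s) ?_ n
    rw [abs_of_neg (by linarith), abs_of_neg (by linarith)]
    linarith
  · simp

theorem sigma_taylor_remainder_bound_general (d k m : ℕ) (hm : m ≤ k) :
    ∃ C : ℝ, 0 < C ∧
    ∀ x ∈ Metric.closedBall (0 : Euc d) 1, ∀ z ∈ Metric.closedBall (0 : Euc d) 1,
    ∀ θ ∈ Params d, ∀ I : Fin m → Fin d,
      |sigmaT d k m θ x I - taylorT d k m (k - m) θ z x I| ≤ C * dist x z ^ (k - m) := by
  refine ⟨k.descFactorial m, mod_cast Nat.descFactorial_pos.mpr hm, ?_⟩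
  rintro x - z - θ ⟨hω, -⟩ I
  replace hω : ‖θ.1‖ = 1 := mem_sphere_zero_iff_norm.mp hω
  set s := dot θ.1 x + θ.2
  set t := dot θ.1 z + θ.2
  have hst : |s - t| ≤ dist x z := calc
    |s - t| = |inner ℝ θ.1 (x - z)| := by
      rw [← dot_eq_inner, dot_sub_right, add_sub_add_right_eq_sub]
    _ ≤ ‖θ.1‖ * ‖x - z‖ := abs_real_inner_le_norm _ _
    _ = dist x z := by rw [hω, one_mul, dist_eq_norm]
  have hdiff : sigmaT d k m θ x I - taylorT d k m (k - m) θ z x I =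
      k.descFactorial m * (∏ j, θ.1 (I j)) *
        ((if 0 ≤ s then s ^ (k - m) else 0) - (if 0 ≤ t then s ^ (k - m) else 0)) := by
    rw [taylorT_eq]
    unfold sigmaT
    split_ifs <;> ring
  rw [hdiff, abs_mul, abs_mul, Nat.abs_cast]
  calc _ ≤ k.descFactorial m * 1 * |s - t| ^ (k - m) := by
        gcongr
        · exact abs_prod_apply_le_one hω I
        · exact abs_ite_pow_sub_ite_pow_le s t (k - m)
    _ ≤ _ := by
        rw [mul_one]
        gcongr

/-- **Taylor remainder bound for the ReLU^k derivative tensors.**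
Fix `d ≥ 1` and `0 ≤ m ≤ k`. There is `C = C(d,k)` such that for all `x, z ∈ B^d` and
all `θ = (ω,b) ∈ S^{d−1} × [−1,1]`,
`‖σ_k^{(m)}(x;θ) − 𝒯^{m,k−m}_z(x;θ)‖ ≤ C |x − z|^{k−m}`, where `‖·‖` is the
entrywise maximum norm on tensors (stated here entrywise). -/
theorem sigma_taylor_remainder_bound (d k m : ℕ) (hd : 1 ≤ d) (hm : m ≤ k) :
    ∃ C : ℝ, 0 < C ∧
    ∀ x ∈ Metric.closedBall (0 : Euc d) 1, ∀ z ∈ Metric.closedBall (0 : Euc d) 1,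
    ∀ θ ∈ Params d, ∀ I : Fin m → Fin d,
      |sigmaT d k m θ x I - taylorT d k m (k - m) θ z x I| ≤ C * dist x z ^ (k - m) :=
  sigma_taylor_remainder_bound_general d k m hm

end
end

section
/- Fix integers d ≥ 1, k ≥ 0 and a constant A > 0. There exists a constant C = C(d,k,A) such that the following holds. Let L ≥ 1, let x ∈ B^d and let x₁, …, x_L ∈ B^d satisfy |x_{l+1} − x_l| ≤ A·2^{−l} for 1 ≤ l < L and |x − x_L| ≤ A·2^{−L}. For θ ∈ S^{d−1} × [−1,1], 0 ≤ m ≤ k and 1 ≤ l ≤ L define the order-m tensor φ^m_l(θ) = σ_k^{(m)}(x_l;θ) − 𝒯^{m,k−m}_{x_{l−1}}(x_l;θ) for l ≥ 2 and φ^m_1(θ) = σ_k^{(m)}(x_1;θ). Then for each 0 ≤ m ≤ k there exist tensors Γ^m_{i,l} of order m + i, for 1 ≤ i ≤ k − m and 1 ≤ l ≤ L, depending only on x and x₁,…,x_L (not on θ), with ‖Γ^m_{i,l}‖ ≤ C·2^{−il}, such that for every θ = (ω,b) ∈ S^{d−1} × [−1,1] for which the inequalities ω·x + b ≥ 0 and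 ω·x_L + b ≥ 0 either both hold or both fail, one has σ_k^{(m)}(x;θ) = Σ_{l=1}^{L} φ^m_l(θ) + Σ_{i=1}^{k−m} Σ_{l=1}^{L} ⟨ φ^{m+i}_l(θ), Γ^m_{i,l} ⟩. -/
noncomputable section

/-- Contraction `⟨X, Y⟩` of an order-`(m+i)` tensor `X` with an order-`i` tensor `Y`,
an order-`m` tensor: `⟨X,Y⟩_I = Σ_J X_{I⌢J} Y_J`. -/
def contractT (d m i : ℕ) (X : (Fin (m + i) → Fin d) → ℝ) (Y : (Fin i → Fin d) → ℝ) :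
    (Fin m → Fin d) → ℝ :=
  fun I => ∑ J : Fin i → Fin d, X (Fin.append I J) * Y J

/-- The multiscale pieces `φ^m_l(θ)`: `φ^m_1(θ) = σ_k^{(m)}(x_1;θ)` and, for `l ≥ 2`,
`φ^m_l(θ) = σ_k^{(m)}(x_l;θ) − 𝒯^{m,k−m}_{x_{l−1}}(x_l;θ)`. -/
def phiT (d k m : ℕ) (θ : Euc d × ℝ) (xs : ℕ → Euc d) (l : ℕ) : (Fin m → Fin d) → ℝ :=
  if 2 ≤ l then
    fun I => sigmaT d k m θ (xs l) I - taylorT d k m (k - m) θ (xs (l - 1)) (xs l) I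
  else sigmaT d k m θ (xs 1)

namespace MultiAux

def F (k n : ℕ) (t : ℝ) : ℝ :=
  if 0 ≤ t then (Nat.descFactorial k n : ℝ) * t ^ (k - n) else 0

lemma descFactorial_add_eq (k m i : ℕ) :
    Nat.descFactorial k (m + i) = Nat.descFactorial k m * Nat.descFactorial (k - m) i := by
  induction i with
  | zero => simp
  | succ i ih =>
    have h1 : m + (i + 1) = (m + i) + 1 := by omega
    rw [h1, Nat.descFactorial_succ, ih, Nat.descFactorial_succ]
    have h2 : k - (m + i) = k - m - i := by omega
    rw [h2]; ring

lemma lemA (k m : ℕ) (hm : m ≤ k) (t s : ℝ) (hiff : 0 ≤ t ↔ 0 ≤ s) :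
    F k m t = ∑ i ∈ Finset.range (k - m + 1),
      (1 / (Nat.factorial i : ℝ)) * F k (m + i) s * (t - s) ^ i := by
  by_cases hs : 0 ≤ s
  · have ht : 0 ≤ t := hiff.mpr hs
    simp only [F, if_pos hs, if_pos ht]
    rw [show t ^ (k - m) = ((t - s) + s) ^ (k - m) by ring_nf, add_pow, Finset.mul_sum]
    refine Finset.sum_congr rfl fun i hi => ?_
    rw [Finset.mem_range] at hi
    have hik : i ≤ k - m := by omega
    have hcast : (Nat.descFactorial k (m + i) : ℝ)
        = (Nat.descFactorial k m : ℝ) * ((k - m).choose i : ℝ) * (Nat.factorial i : ℝ) := by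
      rw [descFactorial_add_eq, Nat.descFactorial_eq_factorial_mul_choose (k-m) i]
      push_cast; ring
    have hexp : k - (m + i) = k - m - i := by omega
    have hfac : (Nat.factorial i : ℝ) ≠ 0 := by
      exact_mod_cast Nat.factorial_ne_zero i
    rw [hexp, hcast]
    field_simp
  · have ht : ¬ 0 ≤ t := fun h => hs (hiff.mp h)
    simp [F, hs, ht]

lemma triangle (f : ℕ → ℕ → ℝ) (N : ℕ) :
    ∑ n ∈ Finset.range (N + 1), ∑ i ∈ Finset.range (n + 1), f i (n - i)
      = ∑ i ∈ Finset.range (N + 1), ∑ p ∈ Finset.range (N - i + 1), f i p := by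
  rw [Finset.sum_sigma' (Finset.range (N+1)) (fun n => Finset.range (n+1))
      (fun n i => f i (n - i)),
    Finset.sum_sigma' (Finset.range (N+1)) (fun i => Finset.range (N - i + 1))
      (fun i p => f i p)]
  refine Finset.sum_nbij' (fun x => ⟨x.2, x.1 - x.2⟩) (fun y => ⟨y.1 + y.2, y.1⟩) ?_ ?_ ?_ ?_ ?_
  · rintro ⟨n, i⟩ h
    simp only [Finset.mem_sigma, Finset.mem_range] at *
    omega
  · rintro ⟨i, p⟩ h
    simp only [Finset.mem_sigma, Finset.mem_range] at *
    omega
  · rintro ⟨n, i⟩ h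
    simp only [Finset.mem_sigma, Finset.mem_range] at h
    have h2 : i + (n - i) = n := by omega
    simp [h2]
  · rintro ⟨i, p⟩ h
    simp only [Finset.mem_sigma, Finset.mem_range] at h
    have h2 : i + p - i = p := by omega
    simp [h2]
  · rintro ⟨n, i⟩ h
    rfl

lemma lemB (c : ℕ → ℝ) (u v : ℝ) (N : ℕ) :
    ∑ i ∈ Finset.range (N + 1), (1 / (Nat.factorial i : ℝ)) *
        (∑ p ∈ Finset.range (N - i + 1), (1 / (Nat.factorial p : ℝ)) * c (i + p) * v ^ p) *
        u ^ i
      = ∑ n ∈ Finset.range (N + 1), (1 / (Nat.factorial n : ℝ)) * c n * (u + v) ^ n := by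
  have key : ∀ n ∈ Finset.range (N + 1),
      (1 / (Nat.factorial n : ℝ)) * c n * (u + v) ^ n
        = ∑ i ∈ Finset.range (n + 1),
            (1 / (Nat.factorial i : ℝ)) * (1 / (Nat.factorial (n - i) : ℝ)) * c (i + (n - i))
              * v ^ (n - i) * u ^ i := by
    intro n _
    rw [add_pow, Finset.mul_sum]
    refine Finset.sum_congr rfl fun i hi => ?_
    rw [Finset.mem_range] at hi
    have hin : i ≤ n := by omega
    have hni : i + (n - i) = n := by omega
    rw [hni]
    have h2 : (Nat.factorial i : ℝ) ≠ 0 := by exact_mod_cast Nat.factorial_ne_zero i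
    have h3 : (Nat.factorial (n - i) : ℝ) ≠ 0 := by exact_mod_cast Nat.factorial_ne_zero (n - i)
    have hC : (Nat.choose n i : ℝ) = (n.factorial : ℝ) / (i.factorial * (n - i).factorial) := by
      rw [eq_div_iff (by positivity)]
      exact_mod_cast congrArg (Nat.cast : ℕ → ℝ)
        (by rw [← mul_assoc]; exact Nat.choose_mul_factorial_mul_factorial hin)
    have h1 : (Nat.factorial n : ℝ) ≠ 0 := by exact_mod_cast Nat.factorial_ne_zero n
    rw [hC]
    field_simp
  rw [Finset.sum_congr rfl key,
    triangle (fun i p => (1 / (Nat.factorial i : ℝ)) * (1 / (Nat.factorial p : ℝ)) * c (i + p)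
      * v ^ p * u ^ i) N]
  refine Finset.sum_congr rfl fun i _ => ?_
  rw [Finset.mul_sum, Finset.sum_mul]
  refine Finset.sum_congr rfl fun p _ => ?_
  ring

def sPhi (k n : ℕ) (a : ℕ → ℝ) (l : ℕ) : ℝ :=
  if 2 ≤ l then F k n (a l)
      - ∑ p ∈ Finset.range (k - n + 1),
          (1 / (Nat.factorial p : ℝ)) * F k (n + p) (a (l - 1)) * (a l - a (l - 1)) ^ p
  else F k n (a 1)

lemma step (k m : ℕ) (T al al' : ℝ) :
    ∑ i ∈ Finset.range (k - m + 1), (1 / (Nat.factorial i : ℝ)) * F k (m + i) al * (T - al) ^ i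
      = (∑ i ∈ Finset.range (k - m + 1), (1 / (Nat.factorial i : ℝ)) *
            (F k (m + i) al - ∑ p ∈ Finset.range (k - (m + i) + 1),
              (1 / (Nat.factorial p : ℝ)) * F k (m + i + p) al' * (al - al') ^ p) * (T - al) ^ i)
          + ∑ n ∈ Finset.range (k - m + 1),
              (1 / (Nat.factorial n : ℝ)) * F k (m + n) al' * (T - al') ^ n := by
  have hB := lemB (fun n => F k (m + n) al') (T - al) (al - al') (k - m)
  simp only [sub_add_sub_cancel] at hB
  have hBeq : (∑ i ∈ Finset.range (k - m + 1), (1 / (Nat.factorial i : ℝ)) *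
      (∑ p ∈ Finset.range (k - (m + i) + 1),
        (1 / (Nat.factorial p : ℝ)) * F k (m + i + p) al' * (al - al') ^ p) * (T - al) ^ i)
      = ∑ n ∈ Finset.range (k - m + 1),
          (1 / (Nat.factorial n : ℝ)) * F k (m + n) al' * (T - al') ^ n := by
    rw [← hB]
    refine Finset.sum_congr rfl fun i _ => ?_
    simp only [← Nat.sub_sub, add_assoc]
  have hsub : ∀ i ∈ Finset.range (k - m + 1),
      (1 / (Nat.factorial i : ℝ)) *
        (F k (m + i) al - ∑ p ∈ Finset.range (k - (m + i) + 1),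
          (1 / (Nat.factorial p : ℝ)) * F k (m + i + p) al' * (al - al') ^ p) * (T - al) ^ i
      = (1 / (Nat.factorial i : ℝ)) * F k (m + i) al * (T - al) ^ i
        - (1 / (Nat.factorial i : ℝ)) *
            (∑ p ∈ Finset.range (k - (m + i) + 1),
              (1 / (Nat.factorial p : ℝ)) * F k (m + i + p) al' * (al - al') ^ p) * (T - al) ^ i :=
    fun i _ => by ring
  rw [Finset.sum_congr rfl hsub, Finset.sum_sub_distrib, hBeq]
  ring

lemma scalar_main (k m L : ℕ) (hm : m ≤ k) (hL : 1 ≤ L) (T : ℝ) (a : ℕ → ℝ)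
    (hiff : 0 ≤ T ↔ 0 ≤ a L) :
    F k m T = ∑ l ∈ Finset.Icc 1 L, ∑ i ∈ Finset.range (k - m + 1),
      (1 / (Nat.factorial i : ℝ)) * sPhi k (m + i) a l * (T - a l) ^ i := by
  set Tm : ℕ → ℝ := fun l => ∑ i ∈ Finset.range (k - m + 1),
      (1 / (Nat.factorial i : ℝ)) * sPhi k (m + i) a l * (T - a l) ^ i with hTm
  set g : ℕ → ℝ := fun l => ∑ i ∈ Finset.range (k - m + 1),
      (1 / (Nat.factorial i : ℝ)) * F k (m + i) (a l) * (T - a l) ^ i with hg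
  have key : ∀ j, j < L → F k m T = (∑ l ∈ Finset.Icc (L - j + 1) L, Tm l) + g (L - j) := by
    intro j
    induction j with
    | zero =>
      intro _
      have h1 : Finset.Icc (L - 0 + 1) L = ∅ := Finset.Icc_eq_empty (by omega)
      rw [h1]
      simp only [Finset.sum_empty, Nat.sub_zero, zero_add]
      exact lemA k m hm T (a L) hiff
    | succ j ih =>
      intro hj
      have hih := ih (by omega)
      set l : ℕ := L - j with hl
      have hl2 : 2 ≤ l := by omega
      have hstep : g l = Tm l + g (l - 1) := by
        rw [hg, hTm]
        simp only []
        rw [step k m T (a l) (a (l - 1))]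
        congr 1
        refine Finset.sum_congr rfl fun i _ => ?_
        rw [sPhi, if_pos hl2]
      have hsum : ∑ l' ∈ Finset.Icc l L, Tm l' = Tm l + ∑ l' ∈ Finset.Icc (l + 1) L, Tm l' := by
        rw [← Finset.Ico_add_one_right_eq_Icc, Finset.sum_eq_sum_Ico_succ_bot (by omega) Tm,
          Finset.Ico_add_one_right_eq_Icc]
      have h2 : L - (j + 1) + 1 = l := by omega
      have h3 : L - (j + 1) = l - 1 := by omega
      rw [h2, h3, hsum, hih, hstep]
      ring
  have hfin := key (L - 1) (by omega)
  have h4 : L - (L - 1) = 1 := by omega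
  rw [h4] at hfin
  have hg1 : g 1 = Tm 1 := by
    rw [hg, hTm]
    refine Finset.sum_congr rfl fun i _ => ?_
    rw [sPhi, if_neg (by omega)]
  have hsum1 : ∑ l ∈ Finset.Icc 1 L, Tm l = Tm 1 + ∑ l ∈ Finset.Icc (1+1) L, Tm l := by
    rw [← Finset.Ico_add_one_right_eq_Icc, Finset.sum_eq_sum_Ico_succ_bot (by omega) Tm, Finset.Ico_add_one_right_eq_Icc]
  rw [hsum1, hfin, hg1]
  ring

lemma hsplit (h : ℕ → ℝ) (n : ℕ) :
    ∑ i ∈ Finset.range (n + 1), h i = h 0 + ∑ i ∈ Finset.Icc 1 n, h i := by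
  rw [Finset.range_eq_Ico, Finset.sum_eq_sum_Ico_succ_bot (Nat.succ_pos n) h]
  norm_num [Finset.Ico_add_one_right_eq_Icc]

lemma sigmaT_eq (d k n : ℕ) (θ : Euc d × ℝ) (z : Euc d) (I : Fin n → Fin d) :
    sigmaT d k n θ z I = F k n (dot θ.1 z + θ.2) * ∏ j, θ.1 (I j) := by
  unfold sigmaT F
  split_ifs with h
  · ring
  · rw [zero_mul]

lemma sum_prod_pow (d q : ℕ) (f : Fin d → ℝ) :
    ∑ J : Fin q → Fin d, ∏ j, f (J j) = (∑ a, f a) ^ q := by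
  rw [← Fintype.piFinset_univ, ← Finset.prod_univ_sum (fun _ : Fin q => Finset.univ)
    (fun _ a => f a)]
  simp [Finset.prod_const]

lemma prod_append (d m q : ℕ) (g : Fin d → ℝ) (I : Fin m → Fin d) (J : Fin q → Fin d) :
    ∏ j : Fin (m + q), g (Fin.append I J j) = (∏ j, g (I j)) * ∏ j, g (J j) := by
  rw [Fin.prod_univ_add (fun j => g (Fin.append I J j))]
  simp [Fin.append_left, Fin.append_right]

lemma dot_sub (d : ℕ) (w y z : Euc d) : dot w (y - z) = dot w y - dot w z := by
  simp [dot, mul_sub, Finset.sum_sub_distrib, PiLp.sub_apply]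

lemma contract_core (d q n : ℕ) (θ : Euc d × ℝ) (c : ℝ) (v : Euc d) (I : Fin n → Fin d) :
    ∑ J : Fin q → Fin d, (c * ∏ j : Fin (n + q), θ.1 (Fin.append I J j)) * ∏ j, v (J j)
      = c * (∏ j, θ.1 (I j)) * (dot θ.1 v) ^ q := by
  have h1 : ∀ J : Fin q → Fin d,
      (c * ∏ j : Fin (n + q), θ.1 (Fin.append I J j)) * ∏ j, v (J j)
        = (c * ∏ j, θ.1 (I j)) * ∏ j : Fin q, (fun a => θ.1 a * v a) (J j) := by
    intro J
    rw [prod_append, show ∏ j : Fin q, (fun a => θ.1 a * v a) (J j)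
      = (∏ j, θ.1 (J j)) * ∏ j, v (J j) from Finset.prod_mul_distrib]
    ring
  rw [Finset.sum_congr rfl fun J _ => h1 J, ← Finset.mul_sum,
    sum_prod_pow d q (fun a => θ.1 a * v a)]
  rfl

lemma taylorT_eq (d k n r : ℕ) (θ : Euc d × ℝ) (z y : Euc d) (I : Fin n → Fin d) :
    taylorT d k n r θ z y I
      = (∑ q ∈ Finset.range (r + 1), (1 / (Nat.factorial q : ℝ)) *
          F k (n + q) (dot θ.1 z + θ.2) * ((dot θ.1 y + θ.2) - (dot θ.1 z + θ.2)) ^ q) *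
        ∏ j, θ.1 (I j) := by
  unfold taylorT
  rw [Finset.sum_mul]
  refine Finset.sum_congr rfl fun q _ => ?_
  have h2 : ∀ J : Fin q → Fin d, sigmaT d k (n + q) θ z (Fin.append I J)
      = F k (n + q) (dot θ.1 z + θ.2) * ∏ j : Fin (n + q), θ.1 (Fin.append I J j) :=
    fun J => sigmaT_eq d k (n + q) θ z (Fin.append I J)
  rw [Finset.sum_congr rfl fun J _ => by rw [h2 J],
    contract_core d q n θ (F k (n + q) (dot θ.1 z + θ.2)) (y - z) I, dot_sub]
  ring

lemma phiT_eq (d k n : ℕ) (θ : Euc d × ℝ) (xs : ℕ → Euc d) (l : ℕ) (I : Fin n → Fin d) :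
    phiT d k n θ xs l I
      = sPhi k n (fun l' => dot θ.1 (xs l') + θ.2) l * ∏ j, θ.1 (I j) := by
  by_cases h : 2 ≤ l
  · simp only [phiT, sPhi, if_pos h]
    rw [sigmaT_eq, taylorT_eq]
    ring
  · simp only [phiT, sPhi, if_neg h]
    exact sigmaT_eq d k n θ (xs 1) I

lemma contractT_eq (d k n i : ℕ) (θ : Euc d × ℝ) (xs : ℕ → Euc d) (x : Euc d) (l : ℕ)
    (I : Fin n → Fin d) :
    contractT d n i (phiT d k (n + i) θ xs l)
        (fun J => (1 / (Nat.factorial i : ℝ)) * ∏ j, (x - xs l) (J j)) I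
      = sPhi k (n + i) (fun l' => dot θ.1 (xs l') + θ.2) l *
          ((1 / (Nat.factorial i : ℝ)) *
            ((dot θ.1 x + θ.2) - (dot θ.1 (xs l) + θ.2)) ^ i) * ∏ j, θ.1 (I j) := by
  unfold contractT
  have h1 : ∀ J : Fin i → Fin d,
      phiT d k (n + i) θ xs l (Fin.append I J) *
          ((1 / (Nat.factorial i : ℝ)) * ∏ j, (x - xs l) (J j))
        = (1 / (Nat.factorial i : ℝ)) *
            ((sPhi k (n + i) (fun l' => dot θ.1 (xs l') + θ.2) l *
              ∏ j : Fin (n + i), θ.1 (Fin.append I J j)) * ∏ j, (x - xs l) (J j)) := by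
    intro J
    rw [phiT_eq]
    ring
  rw [Finset.sum_congr rfl fun J _ => h1 J, ← Finset.mul_sum]
  have h3 : ∀ J : Fin i → Fin d,
      (sPhi k (n + i) (fun l' => dot θ.1 (xs l') + θ.2) l *
        ∏ j : Fin (n + i), θ.1 (Fin.append I J j)) * ∏ j, (x - xs l) (J j)
      = (sPhi k (n + i) (fun l' => dot θ.1 (xs l') + θ.2) l *
        ∏ j : Fin (n + i), θ.1 (Fin.append I J j)) * ∏ j, (x - xs l) (J j) := fun _ => rfl
  rw [contract_core d i n θ (sPhi k (n + i) (fun l' => dot θ.1 (xs l') + θ.2) l) (x - xs l) I,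
    dot_sub]
  ring

end MultiAux

/-- **Multiscale representation of the ReLU^k derivative tensors (Lemma 4 in the
paper).** Fix `d ≥ 1`, `k ≥ 0` and `A > 0`. There is `C = C(d,k,A)` such that: for any
`L ≥ 1`, any `x ∈ B^d` and any points `x_1,…,x_L ∈ B^d` with `|x_{l+1} − x_l| ≤ A 2^{−l}`
and `|x − x_L| ≤ A 2^{−L}`, and any `0 ≤ m ≤ k`, there are tensors `Γ^m_{i,l}` (of
order `i`, depending only on `x, x_1, …, x_L` and not on `θ`) with
`‖Γ^m_{i,l}‖ ≤ C 2^{−il}`, such that for every `θ = (ω,b) ∈ S^{d−1} × [−1,1]` with `x`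
and `x_L` on the same side of the hyperplane `{ω·y + b = 0}`,
`σ_k^{(m)}(x;θ) = Σ_{l=1}^{L} φ^m_l(θ) + Σ_{i=1}^{k−m} Σ_{l=1}^{L} ⟨φ^{m+i}_l(θ), Γ^m_{i,l}⟩`. -/


theorem multiscale_representation (d k : ℕ) (hd : 1 ≤ d) (A : ℝ) (hA : 0 < A) :
    ∃ C : ℝ, 0 < C ∧
    ∀ L : ℕ, 1 ≤ L →
    ∀ x ∈ Metric.closedBall (0 : Euc d) 1,
    ∀ xs : ℕ → Euc d,
      (∀ l, 1 ≤ l → l ≤ L → xs l ∈ Metric.closedBall (0 : Euc d) 1) →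
      (∀ l, 1 ≤ l → l < L → dist (xs (l + 1)) (xs l) ≤ A * (2⁻¹ : ℝ) ^ l) →
      dist x (xs L) ≤ A * (2⁻¹ : ℝ) ^ L →
    ∀ m : ℕ, m ≤ k →
    ∃ Γ : (i : ℕ) → (l : ℕ) → (Fin i → Fin d) → ℝ,
      (∀ i l, 1 ≤ i → i ≤ k - m → 1 ≤ l → l ≤ L →
        ∀ J : Fin i → Fin d, |Γ i l J| ≤ C * (2⁻¹ : ℝ) ^ (i * l)) ∧
      ∀ θ : Euc d × ℝ, θ ∈ Params d →
        ((0 ≤ dot θ.1 x + θ.2) ↔ (0 ≤ dot θ.1 (xs L) + θ.2)) →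
        ∀ I : Fin m → Fin d,
          sigmaT d k m θ x I =
            (∑ l ∈ Finset.Icc 1 L, phiT d k m θ xs l I) +
              ∑ i ∈ Finset.Icc 1 (k - m), ∑ l ∈ Finset.Icc 1 L,
                contractT d m i (phiT d k (m + i) θ xs l) (Γ i l) I := by
  classical
  refine ⟨(2 * A + 2) ^ k, by positivity, ?_⟩
  intro L hL x hx xs hball hchain hlast m hm
  refine ⟨fun i l J => (1 / (Nat.factorial i : ℝ)) * ∏ j, (x - xs l) (J j), ?_, ?_⟩
  · -- bounds on Γ
    have hdist : ∀ l, 1 ≤ l → l ≤ L → dist x (xs l) ≤ 2 * A * (2⁻¹ : ℝ) ^ l := by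
      have key : ∀ j l, l = L - j → 1 ≤ l → l ≤ L → dist x (xs l) ≤ 2 * A * (2⁻¹ : ℝ) ^ l := by
        intro j
        induction j with
        | zero =>
          intro l h0 h1 h2
          have hlL : l = L := by omega
          subst hlL
          have hp : (0 : ℝ) ≤ A * (2⁻¹ : ℝ) ^ l := by positivity
          linarith [hlast]
        | succ j ih =>
          intro l h0 h1 h2
          have hlt : l < L := by omega
          have hih := ih (l + 1) (by omega) (by omega) (by omega)
          have htri := dist_triangle x (xs (l + 1)) (xs l)
          have hc := hchain l h1 hlt
          rw [pow_succ] at hih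
          nlinarith [htri, hc, hih]
      intro l h1 h2
      exact key (L - l) l (by omega) h1 h2
    intro i l hi1 hik hl1 hlL J
    have hcomp : ∀ a : Fin d, |(x - xs l) a| ≤ dist x (xs l) := by
      intro a
      rw [dist_eq_norm, EuclideanSpace.norm_eq]
      calc |(x - xs l) a| = Real.sqrt (‖(x - xs l) a‖ ^ 2) := by
            rw [Real.norm_eq_abs, Real.sqrt_sq_eq_abs, abs_abs]
        _ ≤ Real.sqrt (∑ j, ‖(x - xs l) j‖ ^ 2) :=
            Real.sqrt_le_sqrt (Finset.single_le_sum
              (f := fun j => ‖(x - xs l) j‖ ^ 2) (fun j _ => by positivity) (Finset.mem_univ a))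
    have hb : ∀ a : Fin d, |(x - xs l) a| ≤ 2 * A * (2⁻¹ : ℝ) ^ l :=
      fun a => (hcomp a).trans (hdist l hl1 hlL)
    have h1 : |(1 / (Nat.factorial i : ℝ)) * ∏ j, (x - xs l) (J j)|
        ≤ (2 * A * (2⁻¹ : ℝ) ^ l) ^ i := by
      rw [abs_mul, Finset.abs_prod]
      have hf1 : |(1 / (Nat.factorial i : ℝ))| ≤ 1 := by
        rw [abs_of_nonneg (by positivity), div_le_one (by positivity)]
        exact_mod_cast Nat.one_le_iff_ne_zero.mpr (Nat.factorial_ne_zero i)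
      calc |(1 / (Nat.factorial i : ℝ))| * ∏ j, |(x - xs l) (J j)|
          ≤ 1 * ∏ _j : Fin i, (2 * A * (2⁻¹ : ℝ) ^ l) := by
            apply mul_le_mul hf1 ?_ ?_ zero_le_one
            · exact Finset.prod_le_prod (fun j _ => abs_nonneg _) (fun j _ => hb (J j))
            · exact Finset.prod_nonneg fun j _ => abs_nonneg _
        _ = (2 * A * (2⁻¹ : ℝ) ^ l) ^ i := by
            simp [Finset.prod_const]
    refine h1.trans ?_
    have h2 : (2 * A * (2⁻¹ : ℝ) ^ l) ^ i = (2 * A) ^ i * (2⁻¹ : ℝ) ^ (i * l) := by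
      rw [mul_pow, ← pow_mul, Nat.mul_comm l i]
    rw [h2]
    have h3 : (2 * A) ^ i ≤ (2 * A + 2) ^ k :=
      le_trans (pow_le_pow_left₀ (by linarith) (by linarith) i)
        (pow_le_pow_right₀ (by linarith) (by omega))
    exact mul_le_mul_of_nonneg_right h3 (by positivity)
  · -- the representation identity
    intro θ hθ hiff I
    have hmain : MultiAux.F k m (dot θ.1 x + θ.2)
        = ∑ l ∈ Finset.Icc 1 L, ∑ i ∈ Finset.range (k - m + 1),
            (1 / (Nat.factorial i : ℝ)) *
              MultiAux.sPhi k (m + i) (fun l' => dot θ.1 (xs l') + θ.2) l *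
              ((dot θ.1 x + θ.2) - (dot θ.1 (xs l) + θ.2)) ^ i :=
      MultiAux.scalar_main k m L hm hL (dot θ.1 x + θ.2)
        (fun l' => dot θ.1 (xs l') + θ.2) hiff
    have hmain2 : MultiAux.F k m (dot θ.1 x + θ.2)
        = (∑ l ∈ Finset.Icc 1 L, MultiAux.sPhi k m (fun l' => dot θ.1 (xs l') + θ.2) l)
          + ∑ i ∈ Finset.Icc 1 (k - m), ∑ l ∈ Finset.Icc 1 L,
              MultiAux.sPhi k (m + i) (fun l' => dot θ.1 (xs l') + θ.2) l *
                ((1 / (Nat.factorial i : ℝ)) *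
                  ((dot θ.1 x + θ.2) - (dot θ.1 (xs l) + θ.2)) ^ i) := by
      rw [hmain]
      calc ∑ l ∈ Finset.Icc 1 L, ∑ i ∈ Finset.range (k - m + 1),
            (1 / (Nat.factorial i : ℝ)) *
              MultiAux.sPhi k (m + i) (fun l' => dot θ.1 (xs l') + θ.2) l *
              ((dot θ.1 x + θ.2) - (dot θ.1 (xs l) + θ.2)) ^ i
          = ∑ l ∈ Finset.Icc 1 L,
              ((1 / (Nat.factorial 0 : ℝ)) *
                MultiAux.sPhi k (m + 0) (fun l' => dot θ.1 (xs l') + θ.2) l *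
                ((dot θ.1 x + θ.2) - (dot θ.1 (xs l) + θ.2)) ^ 0
               + ∑ i ∈ Finset.Icc 1 (k - m),
                  (1 / (Nat.factorial i : ℝ)) *
                    MultiAux.sPhi k (m + i) (fun l' => dot θ.1 (xs l') + θ.2) l *
                    ((dot θ.1 x + θ.2) - (dot θ.1 (xs l) + θ.2)) ^ i) :=
            Finset.sum_congr rfl fun l _ => MultiAux.hsplit _ _
        _ = (∑ l ∈ Finset.Icc 1 L,
              (1 / (Nat.factorial 0 : ℝ)) *
                MultiAux.sPhi k (m + 0) (fun l' => dot θ.1 (xs l') + θ.2) l *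
                ((dot θ.1 x + θ.2) - (dot θ.1 (xs l) + θ.2)) ^ 0)
            + ∑ l ∈ Finset.Icc 1 L, ∑ i ∈ Finset.Icc 1 (k - m),
                (1 / (Nat.factorial i : ℝ)) *
                  MultiAux.sPhi k (m + i) (fun l' => dot θ.1 (xs l') + θ.2) l *
                  ((dot θ.1 x + θ.2) - (dot θ.1 (xs l) + θ.2)) ^ i := by
            rw [Finset.sum_add_distrib]
        _ = (∑ l ∈ Finset.Icc 1 L, MultiAux.sPhi k m (fun l' => dot θ.1 (xs l') + θ.2) l)
            + ∑ l ∈ Finset.Icc 1 L, ∑ i ∈ Finset.Icc 1 (k - m),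
                MultiAux.sPhi k (m + i) (fun l' => dot θ.1 (xs l') + θ.2) l *
                  ((1 / (Nat.factorial i : ℝ)) *
                    ((dot θ.1 x + θ.2) - (dot θ.1 (xs l) + θ.2)) ^ i) := by
            congr 1
            · exact Finset.sum_congr rfl fun l _ => by simp
            · exact Finset.sum_congr rfl fun l _ => Finset.sum_congr rfl fun i _ => by ring
        _ = (∑ l ∈ Finset.Icc 1 L, MultiAux.sPhi k m (fun l' => dot θ.1 (xs l') + θ.2) l)
            + ∑ i ∈ Finset.Icc 1 (k - m), ∑ l ∈ Finset.Icc 1 L,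
                MultiAux.sPhi k (m + i) (fun l' => dot θ.1 (xs l') + θ.2) l *
                  ((1 / (Nat.factorial i : ℝ)) *
                    ((dot θ.1 x + θ.2) - (dot θ.1 (xs l) + θ.2)) ^ i) := by
            congr 1
            exact Finset.sum_comm
    rw [MultiAux.sigmaT_eq d k m θ x I, hmain2, add_mul, Finset.sum_mul, Finset.sum_mul]
    congr 1
    · exact Finset.sum_congr rfl fun l _ => (MultiAux.phiT_eq d k m θ xs l I).symm
    · refine Finset.sum_congr rfl fun i _ => ?_
      rw [Finset.sum_mul]
      exact Finset.sum_congr rfl fun l _ => (MultiAux.contractT_eq d k m i θ xs x l I).symm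

end
end
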